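/- Let N > M ≥ 1 and suppose H ∈ ℂ^{N×M} has rank M, and that for every nonzero z in the left null space S = {z ∈ ℂ^N : z^H H = 0} and every index i, whenever a coordinate-restriction subspace of S is considered as in the row-by-row construction of a Hermitian annihilator of H, the dimension bounds are tight. Then the real vector space {A ∈ ℂ^{N×N} : A Hermitian, A H = 0} has dimension exactly (N−M)², and consequently the ℝ-linear map A ↦ AH on Hermitian matrices has image of real dimension N² − (N−M)². -/

import Mathlib

/-! Let the columns of `U` be an orthonormal basis of the left null space `ker Hᴴ`, of
dimension `N - rank H`. If `A` is Hermitian and `A * H = 0`, then `Hᴴ * A = (A * H)ᴴ = 0` puts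
the columns of `A` in `ker Hᴴ`, so `A = U * (Uᴴ * A * U) * Uᴴ`: compression by `U` identifies the
Hermitian annihilators of `H` with the Hermitian matrices of size `N - rank H`. Their real
dimension is the complex dimension `(N - rank H) ^ 2` of all such matrices, because
`X = ℜ X + I • ℑ X` splits every matrix uniquely into two Hermitian ones. Rank–nullity for
`A ↦ A * H` on the `N ^ 2`-dimensional space of Hermitian matrices then gives the dimension of
the image. -/

open Matrix

/-- The real vector space of `N × N` Hermitian matrices `A` with `A * H = 0`. -/
noncomputable def hermitianAnnihilator (N M : ℕ) (H : Matrix (Fin N) (Fin M) ℂ) :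
    Submodule ℝ (Matrix (Fin N) (Fin N) ℂ) where
  carrier := {A | Aᴴ = A ∧ A * H = 0}
  add_mem' := by
    intro a b ha hb
    simp only [Set.mem_setOf_eq] at *
    constructor
    · simp [conjTranspose_add, ha.1, hb.1]
    · rw [Matrix.add_mul, ha.2, hb.2, add_zero]
  zero_mem' := by simp
  smul_mem' := by
    intro r A hA
    simp only [Set.mem_setOf_eq] at *
    constructor
    · simp [conjTranspose_smul, hA.1]
    · rw [Matrix.smul_mul, hA.2, smul_zero]

theorem finrank_real_selfAdjoint_submodule (A : Type*) [AddCommGroup A] [Module ℂ A]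
    [StarAddMonoid A] [StarModule ℂ A] [FiniteDimensional ℂ A] :
    Module.finrank ℝ (selfAdjoint.submodule ℝ A) = Module.finrank ℂ A := by
  have : Module.Finite ℝ (selfAdjoint A) := .of_surjective _ realPart_surjective
  let e : A ≃ₗ[ℝ] selfAdjoint A × selfAdjoint A :=
    .ofBijective (realPart.prod imaginaryPart)
      ⟨fun x y h => ComplexStarModule.ext (congrArg Prod.fst h) (congrArg Prod.snd h),
       fun p => ⟨p.1 + Complex.I • p.2, by ext <;> simp⟩⟩
  have h := e.finrank_eq
  rw [Module.finrank_prod, finrank_real_of_complex] at h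
  change Module.finrank ℝ (selfAdjoint A) = _
  omega

theorem Submodule.finrank_map_add_finrank_inf_ker {K V W : Type*} [DivisionRing K]
    [AddCommGroup V] [Module K V] [AddCommGroup W] [Module K W] [FiniteDimensional K V]
    (p : Submodule K V) (f : V →ₗ[K] W) :
    Module.finrank K (p.map f) + Module.finrank K (p ⊓ LinearMap.ker f : Submodule K V) =
      Module.finrank K p := by
  rw [← LinearMap.range_domRestrict, ← Submodule.map_comap_subtype,
    Submodule.finrank_map_subtype_eq, ← LinearMap.ker_domRestrict]
  exact (f.domRestrict p).finrank_range_add_finrank_ker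

theorem Matrix.finrank_ker_toEuclideanLin {n m : Type*} [Fintype n] [Fintype m] [DecidableEq m]
    (A : Matrix n m ℂ) :
    Module.finrank ℂ (LinearMap.ker (toEuclideanLin A)) = Fintype.card m - A.rank := by
  have h := LinearMap.finrank_range_add_finrank_ker (toEuclideanLin A)
  rw [toEuclideanLin_eq_toLin_orthonormal, ← rank_eq_finrank_range_toLin,
    finrank_euclideanSpace] at h
  rw [toEuclideanLin_eq_toLin_orthonormal]
  omega

open scoped ComplexOrder in
theorem Matrix.exists_isometry_ker_conjTranspose {n m : Type*} [Fintype n] [Fintype m]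
    [DecidableEq n] (H : Matrix n m ℂ) :
    ∃ U : Matrix n (Fin (Fintype.card n - H.rank)) ℂ,
      Uᴴ * U = 1 ∧ Uᴴ * H = 0 ∧ ∀ v, Hᴴ *ᵥ v = 0 → U *ᵥ (Uᴴ *ᵥ v) = v := by
  let K := LinearMap.ker (toEuclideanLin Hᴴ)
  have hK : Module.finrank ℂ K = Fintype.card n - H.rank := by
    rw [finrank_ker_toEuclideanLin, rank_conjTranspose]
  let b := (stdOrthonormalBasis ℂ K).reindex (finCongr hK)
  have hb (j) : Hᴴ *ᵥ (b j : EuclideanSpace ℂ n) = 0 := congrArg WithLp.ofLp (b j).2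
  refine ⟨of fun i j => (b j : EuclideanSpace ℂ n) i, ?_, ?_, ?_⟩
  · ext j j'
    have := orthonormal_iff_ite.1 b.orthonormal j j'
    rw [Submodule.coe_inner, EuclideanSpace.inner_eq_star_dotProduct] at this
    simpa [mul_apply, dotProduct, mul_comm, one_apply] using this
  · ext j k
    simpa [mul_apply, mulVec, dotProduct, mul_comm] using congrArg star (congrFun (hb j) k)
  · intro v hv
    ext i
    have := congrArg (fun w : K => (w : EuclideanSpace ℂ n) i)
      (b.sum_repr' ⟨WithLp.toLp 2 v, congrArg (WithLp.toLp 2) hv⟩)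
    simp only at this
    rw [← this]
    simp [mulVec, dotProduct, Submodule.coe_inner, EuclideanSpace.inner_eq_star_dotProduct,
      mul_comm]

theorem conjTranspose_mul_eq_zero_of_mem_hermitianAnnihilator {N M : ℕ}
    {H : Matrix (Fin N) (Fin M) ℂ} {A : Matrix (Fin N) (Fin N) ℂ}
    (hA : A ∈ hermitianAnnihilator N M H) : Hᴴ * A = 0 := by
  simpa [conjTranspose_mul, hA.1] using congrArg conjTranspose hA.2

noncomputable def hermitianAnnihilatorEquivSelfAdjoint {N M : ℕ} {κ : Type*} [Fintype κ]
    [DecidableEq κ] {H : Matrix (Fin N) (Fin M) ℂ} {U : Matrix (Fin N) κ ℂ}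
    (hU : Uᴴ * U = 1) (hUH : Uᴴ * H = 0)
    (hproj : ∀ v, Hᴴ *ᵥ v = 0 → U *ᵥ (Uᴴ *ᵥ v) = v) :
    hermitianAnnihilator N M H ≃ₗ[ℝ] selfAdjoint.submodule ℝ (Matrix κ κ ℂ) where
  toFun A := ⟨Uᴴ * A.1 * U, isHermitian_conjTranspose_mul_mul U A.2.1⟩
  invFun B := ⟨U * B.1 * Uᴴ, isHermitian_mul_mul_conjTranspose U B.2, by
    rw [Matrix.mul_assoc, hUH, Matrix.mul_zero]⟩
  map_add' A B := by ext1; simp [Matrix.mul_add, Matrix.add_mul]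
  map_smul' r A := by ext1; simp
  left_inv A := by
    have hUA : U * (Uᴴ * A.1) = A.1 := by
      have hHA := conjTranspose_mul_eq_zero_of_mem_hermitianAnnihilator A.2
      ext i j
      have := hproj (fun i => A.1 i j) (by
        funext m; simpa [mulVec, dotProduct, mul_apply] using congrFun (congrFun hHA m) j)
      simpa [mulVec, dotProduct, mul_apply, Finset.mul_sum, mul_assoc] using congrFun this i
    have hAU : A.1 * (U * Uᴴ) = A.1 := by
      simpa [conjTranspose_mul, A.2.1, Matrix.mul_assoc] using congrArg conjTranspose hUA
    ext1
    calc U * (Uᴴ * A.1 * U) * Uᴴ = U * (Uᴴ * A.1) * (U * Uᴴ) := by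
          simp only [Matrix.mul_assoc]
      _ = A.1 := by rw [hUA, hAU]
  right_inv B := by
    ext1
    simp only [← Matrix.mul_assoc]
    rw [hU, Matrix.one_mul, Matrix.mul_assoc, hU, Matrix.mul_one]

theorem hermitianAnnihilator_eq_inf_ker (N M : ℕ) (H : Matrix (Fin N) (Fin M) ℂ) :
    hermitianAnnihilator N M H =
      selfAdjoint.submodule ℝ _ ⊓ LinearMap.ker (mulRightLinearMap (Fin N) ℝ H) :=
  rfl

theorem finrank_hermitianAnnihilator (N M : ℕ) (H : Matrix (Fin N) (Fin M) ℂ) :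
    Module.finrank ℝ (hermitianAnnihilator N M H) = (N - H.rank) ^ 2 := by
  obtain ⟨U, hU, hUH, hproj⟩ := H.exists_isometry_ker_conjTranspose
  rw [(hermitianAnnihilatorEquivSelfAdjoint hU hUH hproj).finrank_eq,
    finrank_real_selfAdjoint_submodule, Module.finrank_matrix]
  simp [sq]

theorem finrank_span_hermitian_mul (N M : ℕ) (H : Matrix (Fin N) (Fin M) ℂ) :
    Module.finrank ℝ (Submodule.span ℝ
        {X : Matrix (Fin N) (Fin M) ℂ |
          ∃ A : Matrix (Fin N) (Fin N) ℂ, Aᴴ = A ∧ X = A * H}) =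
      N ^ 2 - (N - H.rank) ^ 2 := by
  have hspan : {X : Matrix (Fin N) (Fin M) ℂ |
      ∃ A : Matrix (Fin N) (Fin N) ℂ, Aᴴ = A ∧ X = A * H} =
        (selfAdjoint.submodule ℝ _).map (mulRightLinearMap (Fin N) ℝ H) := by
    ext X
    simp only [Set.mem_ofPred_eq, SetLike.mem_coe, Submodule.mem_map, mulRightLinearMap_apply]
    exact exists_congr fun A => and_congr_right fun _ => eq_comm
  have h := (selfAdjoint.submodule ℝ _).finrank_map_add_finrank_inf_ker
    (mulRightLinearMap (Fin N) ℝ H)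
  rw [← hermitianAnnihilator_eq_inf_ker, finrank_hermitianAnnihilator,
    finrank_real_selfAdjoint_submodule, Module.finrank_matrix] at h
  simp only [Fintype.card_fin, Module.finrank_self, mul_one] at h
  rw [hspan, Submodule.span_eq, sq N]
  omega

theorem stmt_19_general (N M : ℕ)
    (H : Matrix (Fin N) (Fin M) ℂ) (hr : H.rank = M) :
    Module.finrank ℝ (hermitianAnnihilator N M H) = (N - M) ^ 2 ∧
    Module.finrank ℝ (Submodule.span ℝ
        {X : Matrix (Fin N) (Fin M) ℂ |
          ∃ A : Matrix (Fin N) (Fin N) ℂ, Aᴴ = A ∧ X = A * H})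
      = N ^ 2 - (N - M) ^ 2 := by
  rw [finrank_hermitianAnnihilator, finrank_span_hermitian_mul, hr]
  exact ⟨rfl, rfl⟩

/-- Deterministic core of Theorem 1: for a generic `H` (full column rank `M < N`, no
standard basis vector in its column space), the space of Hermitian annihilators of `H`
has real dimension exactly `(N−M)²`, and the image `{A H : A Hermitian}` has real
dimension `N² − (N−M)²`. -/
theorem stmt_19 (N M : ℕ) (hM1 : 1 ≤ M) (hMN : M < N)
    (H : Matrix (Fin N) (Fin M) ℂ) (hr : H.rank = M)
    (he : ∀ i : Fin N, ¬ ∃ x : Fin M → ℂ, H.mulVec x = Pi.single i 1) :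
    Module.finrank ℝ (hermitianAnnihilator N M H) = (N - M) ^ 2 ∧
    Module.finrank ℝ (Submodule.span ℝ
        {X : Matrix (Fin N) (Fin M) ℂ |
          ∃ A : Matrix (Fin N) (Fin N) ℂ, Aᴴ = A ∧ X = A * H})
      = N ^ 2 - (N - M) ^ 2 :=
  stmt_19_general N M H hr
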